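/- arXiv:2509.07377 — 2 statements merged into one kernel-verified Lean document; each statement's English description precedes it below -/
import Mathlib

section
/- Let p be a prime, p^r a prime power, and n ≥ p^r. Let λ and μ be p^r-stable partitions of n and let H ≤ S_{p^r} be a subgroup whose action on B is transitive. Consider the diagonal S_n-action on Tab^λ × Tab^μ. Then the inclusion of the set (Tab^λ × Tab^μ)^H of H-fixed pairs into Tab^λ × Tab^μ induces a bijection from the set of S_{n−p^r}-orbits on (Tab^λ × Tab^μ)^H to the set of S_n-orbits on Tab^λ × Tab^μ; concretely, every S_n-orbit on Tab^λ × Tab^μ contains an H-fixed pair, and two H-fixed pairs lie in the same S_n-orbit if and only if they lie in the same S_{n−p^r}-orbit. -/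
/-!
Let `B` be the last `p ^ r` points. The stability inequality `2 λ₁ ≥ n + p ^ r` (and the same for
`μ`) forces the first rows of `s` and `t` to overlap in at least `p ^ r` points, so a permutation
moves that overlap onto `B`; a pair that is constant on `B` is fixed by `H`. Conversely,
transitivity of `H` makes an `H`-fixed tableau constant on `B`, and `n - λ₁ < p ^ r` leaves room
for that constant only in the first row. Hence all `H`-fixed pairs agree on `B`, and two functions
in one `S_n`-orbit that agree on `B` are already in one orbit of its pointwise stabiliser.
-/

/-- `f : Fin n → Fin ℓ` is a tableau of shape `lam`: the fiber over `i` has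
cardinality `lam i`. -/
def TabP {n ℓ : ℕ} (lam : Fin ℓ → ℕ) (f : Fin n → Fin ℓ) : Prop :=
  ∀ i : Fin ℓ, (Finset.univ.filter fun a => f a = i).card = lam i

open Finset Equiv

section PermutingFunctions

variable {α β : Type*}

lemma card_add_card_le_card_inter_add_card [Fintype α] [DecidableEq α] (X Y : Finset α) :
    #X + #Y ≤ #(X ∩ Y) + Fintype.card α := by
  rw [← card_union_add_card_inter]
  have := card_le_univ (X ∪ Y)
  omega

lemma exists_perm_forall_mem [Fintype α] [DecidableEq α] {B Y : Finset α} (h : #B ≤ #Y) :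
    ∃ φ : Perm α, ∀ a ∈ B, φ a ∈ Y := by
  obtain ⟨Y', hY', hcard⟩ := exists_subset_card_eq h
  let e : B ≃ Y' := Fintype.equivOfCardEq (by simp [hcard])
  exact ⟨e.extendSubtype, fun a ha => hY' (e.extendSubtype_mem a ha)⟩

lemma comp_perm_eq_self {f : α → β} {B : Finset α} {c : β} (hf : ∀ a ∈ B, f a = c)
    {σ : Perm α} (hσ : ∀ a ∉ B, σ a = a) : f ∘ σ = f := by
  funext a
  by_cases ha : a ∈ B
  · have hσa : σ a ∈ B := by
      by_contra h
      exact h (by rwa [σ.injective (hσ _ h)])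
    exact (hf _ hσa).trans (hf a ha).symm
  · simp [hσ a ha]

lemma apply_eq_apply_of_forall_comp_inv_eq {f : α → β} {H : Subgroup (Perm α)}
    (hf : ∀ σ ∈ H, f ∘ ⇑σ⁻¹ = f) {a b : α} (h : ∃ σ ∈ H, σ a = b) : f a = f b := by
  obtain ⟨σ, hσ, rfl⟩ := h
  simpa using congrFun (hf σ hσ) (σ a)

lemma forall_mem_eq_of_const_of_card_lt [Fintype α] [DecidableEq β] {f : α → β}
    {B : Finset α} {c : β} (hconst : ∀ a ∈ B, ∀ b ∈ B, f a = f b)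
    (hcard : Fintype.card α - #{a | f a = c} < #B) : ∀ a ∈ B, f a = c := by
  intro a ha
  by_contra hne
  have hsub : B ⊆ ({x | f x = f a} : Finset α) := fun x hx => by simpa using hconst x hx a ha
  have hdisj : Disjoint ({x | f x = f a} : Finset α) ({x | f x = c} : Finset α) :=
    disjoint_filter.2 fun x _ h1 h2 => hne (h1.symm.trans h2)
  have := card_le_card hsub
  have := card_le_univ (disjUnion _ _ hdisj)
  rw [card_disjUnion] at this
  omega

lemma exists_perm_comp_eq_of_card_fiber_eq [Fintype α] [DecidableEq β] {g g' : α → β}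
    (h : ∀ b, Fintype.card {a // g a = b} = Fintype.card {a // g' a = b}) :
    ∃ φ : Perm α, g ∘ φ = g' :=
  ⟨Equiv.ofFiberEquiv fun b => Fintype.equivOfCardEq (h b).symm,
    funext fun a => Equiv.ofFiberEquiv_map _ a⟩

lemma card_fiber_comp_perm [Fintype α] [DecidableEq β] (g : α → β) (π : Perm α) (b : β) :
    Fintype.card {a // g (π a) = b} = Fintype.card {a // g a = b} :=
  Fintype.card_congr (π.subtypeEquiv fun _ => Iff.rfl)

lemma card_fiber_subtype_compl_add [Fintype α] [DecidableEq α] [DecidableEq β] (g : α → β)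
    (B : Finset α) (b : β) :
    Fintype.card {x : {a // a ∉ B} // g x = b} + #{a ∈ B | g a = b} =
      Fintype.card {a // g a = b} := by
  rw [Fintype.card_congr (Equiv.subtypeSubtypeEquivSubtypeInter (· ∉ B) (g · = b)),
    Fintype.card_subtype, Fintype.card_subtype, add_comm, ← card_union_of_disjoint]
  · congr 1
    ext a
    by_cases a ∈ B <;> simp [*]
  · exact disjoint_left.2 fun a h1 h2 => (mem_filter.1 h2).2.1 (mem_filter.1 h1).1

lemma exists_perm_fixing_comp_eq [Fintype α] [DecidableEq α] [DecidableEq β] {g g' : α → β}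
    {B : Finset α} (hB : ∀ a ∈ B, g a = g' a) {π : Perm α} (hπ : g ∘ π = g') :
    ∃ φ : Perm α, (∀ a ∈ B, φ a = a) ∧ g ∘ φ = g' := by
  obtain ⟨ψ, hψ⟩ := exists_perm_comp_eq_of_card_fiber_eq
    (g := fun a : {a // a ∉ B} => g a) (g' := fun a => g' a) fun b => by
      have hfiber : #{a ∈ B | g a = b} = #{a ∈ B | g' a = b} :=
        congrArg card (filter_congr fun a ha => by rw [hB a ha])
      have := card_fiber_subtype_compl_add g B b
      have := card_fiber_subtype_compl_add g' B b
      have := card_fiber_comp_perm g π b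
      subst hπ
      simp only [Function.comp_apply] at *
      omega
  refine ⟨Perm.ofSubtype ψ, fun a ha => Perm.ofSubtype_apply_of_not_mem ψ (not_not.2 ha),
    funext fun a => ?_⟩
  by_cases ha : a ∈ B
  · simp [Perm.ofSubtype_apply_of_not_mem ψ (not_not.2 ha), hB a ha]
  · rw [Function.comp_apply, Perm.ofSubtype_apply_of_mem ψ ha]
    exact congrFun hψ ⟨a, ha⟩

end PermutingFunctions

lemma card_filter_le_val {n k : ℕ} (hk : k ≤ n) : #{a : Fin n | n - k ≤ (a : ℕ)} = k := by
  have := card_filter_add_card_filter_not (s := univ) (p := fun a : Fin n => (a : ℕ) < n - k)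
  simp only [not_lt, card_univ, Fintype.card_fin, Fin.card_filter_val_lt] at this
  omega

lemma TabP.comp_perm {n ℓ : ℕ} {lam : Fin ℓ → ℕ} {f : Fin n → Fin ℓ} (hf : TabP lam f)
    (σ : Perm (Fin n)) : TabP lam (f ∘ σ) :=
  fun i => (card_equiv σ (by simp)).trans (hf i)

theorem stmt9_general (p r n ℓ m : ℕ) (hn : p ^ r ≤ n)
    (hl : 0 < ℓ) (hm : 0 < m)
    (lam : Fin ℓ → ℕ)
    (hlstab : n - lam ⟨0, hl⟩ < p ^ r ∧ n + p ^ r ≤ 2 * lam ⟨0, hl⟩)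
    (mu : Fin m → ℕ)
    (hmstab : n - mu ⟨0, hm⟩ < p ^ r ∧ n + p ^ r ≤ 2 * mu ⟨0, hm⟩)
    (H : Subgroup (Equiv.Perm (Fin n)))
    (hH : ∀ σ ∈ H, ∀ a : Fin n, (a : ℕ) < n - p ^ r → σ a = a)
    (htrans : ∀ a b : Fin n, n - p ^ r ≤ (a : ℕ) → n - p ^ r ≤ (b : ℕ) →
      ∃ σ ∈ H, σ a = b) :
    -- every `S_n`-orbit on `Tab^λ × Tab^μ` contains an `H`-fixed pair
    (∀ (s : Fin n → Fin ℓ) (t : Fin n → Fin m), TabP lam s → TabP mu t →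
      ∃ (s' : Fin n → Fin ℓ) (t' : Fin n → Fin m), TabP lam s' ∧ TabP mu t' ∧
        (∀ σ ∈ H, s' ∘ ⇑σ⁻¹ = s' ∧ t' ∘ ⇑σ⁻¹ = t') ∧
        ∃ π : Equiv.Perm (Fin n), s ∘ ⇑π⁻¹ = s' ∧ t ∘ ⇑π⁻¹ = t') ∧
    -- two `H`-fixed pairs lie in the same `S_n`-orbit iff in the same `S_{n−p^r}`-orbit
    (∀ (s s' : Fin n → Fin ℓ) (t t' : Fin n → Fin m),
      TabP lam s → TabP mu t → TabP lam s' → TabP mu t' →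
      (∀ σ ∈ H, s ∘ ⇑σ⁻¹ = s ∧ t ∘ ⇑σ⁻¹ = t) →
      (∀ σ ∈ H, s' ∘ ⇑σ⁻¹ = s' ∧ t' ∘ ⇑σ⁻¹ = t') →
      ((∃ π : Equiv.Perm (Fin n), s ∘ ⇑π⁻¹ = s' ∧ t ∘ ⇑π⁻¹ = t') ↔
        ∃ π : Equiv.Perm (Fin n), (∀ a : Fin n, n - p ^ r ≤ (a : ℕ) → π a = a) ∧
          s ∘ ⇑π⁻¹ = s' ∧ t ∘ ⇑π⁻¹ = t')) := by
  set B : Finset (Fin n) := {a | n - p ^ r ≤ (a : ℕ)}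
  have hB : #B = p ^ r := card_filter_le_val hn
  have mem_B {a : Fin n} : a ∈ B ↔ n - p ^ r ≤ (a : ℕ) := by simp [B]
  have fixed {k : ℕ} {f : Fin n → Fin k} {c : Fin k} (hf : ∀ a ∈ B, f a = c) :
      ∀ σ ∈ H, f ∘ ⇑σ⁻¹ = f := fun σ hσ =>
    comp_perm_eq_self hf fun a ha => hH _ (H.inv_mem hσ) a (not_le.1 (mt mem_B.2 ha))
  have vanish {k : ℕ} {κ : Fin k → ℕ} {c : Fin k} {f : Fin n → Fin k} (hf : TabP κ f)
      (hc : n - κ c < p ^ r) (hfix : ∀ σ ∈ H, f ∘ ⇑σ⁻¹ = f) : ∀ a ∈ B, f a = c :=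
    forall_mem_eq_of_const_of_card_lt (fun a ha b hb => apply_eq_apply_of_forall_comp_inv_eq hfix
      (htrans a b (mem_B.1 ha) (mem_B.1 hb))) (by rwa [Fintype.card_fin, hf c, hB])
  refine ⟨fun s t hs ht => ?_, fun s s' t t' hs ht hs' ht' hfix hfix' =>
    ⟨fun ⟨π, hπs, hπt⟩ => ?_, fun ⟨π, _, h⟩ => ⟨π, h⟩⟩⟩
  · obtain ⟨φ, hφ⟩ := exists_perm_forall_mem (B := B) (Y := {a | s a = ⟨0, hl⟩ ∧ t a = ⟨0, hm⟩}) (by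
      have := card_add_card_le_card_inter_add_card {a | s a = ⟨0, hl⟩} {a | t a = ⟨0, hm⟩}
      rw [hs, ht, Fintype.card_fin, ← filter_and] at this
      omega)
    simp only [mem_filter, mem_univ, true_and] at hφ
    exact ⟨s ∘ φ, t ∘ φ, hs.comp_perm φ, ht.comp_perm φ,
      fun σ hσ => ⟨fixed (fun a ha => (hφ a ha).1) σ hσ, fixed (fun a ha => (hφ a ha).2) σ hσ⟩,
      φ⁻¹, by rw [inv_inv], by rw [inv_inv]⟩
  · have hagree : ∀ a ∈ B, (s a, t a) = (s' a, t' a) := fun a ha => by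
      rw [vanish hs hlstab.1 (fun σ hσ => (hfix σ hσ).1) a ha,
        vanish ht hmstab.1 (fun σ hσ => (hfix σ hσ).2) a ha,
        vanish hs' hlstab.1 (fun σ hσ => (hfix' σ hσ).1) a ha,
        vanish ht' hmstab.1 (fun σ hσ => (hfix' σ hσ).2) a ha]
    obtain ⟨φ, hφB, hφ⟩ := exists_perm_fixing_comp_eq hagree (π := π⁻¹) (by rw [← hπs, ← hπt]; rfl)
    refine ⟨φ⁻¹, fun a ha => Perm.inv_eq_iff_eq.2 (hφB a (mem_B.2 ha)).symm, ?_, ?_⟩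
    · rw [inv_inv]
      exact funext fun a => congrArg Prod.fst (congrFun hφ a)
    · rw [inv_inv]
      exact funext fun a => congrArg Prod.snd (congrFun hφ a)

/-- for `p^r`-stable partitions `λ, μ` of `n` and a transitive subgroup
`H ≤ S_{p^r}`, the inclusion of the `H`-fixed pairs into `Tab^λ × Tab^μ` induces a
bijection on orbit sets: every `S_n`-orbit contains an `H`-fixed pair, and two `H`-fixed
pairs lie in the same `S_n`-orbit iff they lie in the same `S_{n−p^r}`-orbit. -/
theorem stmt9 (p r n ℓ m : ℕ) (hp : p.Prime) (hn : p ^ r ≤ n)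
    (hl : 0 < ℓ) (hm : 0 < m)
    (lam : Fin ℓ → ℕ) (hlanti : Antitone lam) (hlpos : ∀ i, 0 < lam i)
    (hlsum : ∑ i, lam i = n)
    (hlstab : n - lam ⟨0, hl⟩ < p ^ r ∧ n + p ^ r ≤ 2 * lam ⟨0, hl⟩)
    (mu : Fin m → ℕ) (hmanti : Antitone mu) (hmpos : ∀ j, 0 < mu j)
    (hmsum : ∑ j, mu j = n)
    (hmstab : n - mu ⟨0, hm⟩ < p ^ r ∧ n + p ^ r ≤ 2 * mu ⟨0, hm⟩)
    (H : Subgroup (Equiv.Perm (Fin n)))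
    (hH : ∀ σ ∈ H, ∀ a : Fin n, (a : ℕ) < n - p ^ r → σ a = a)
    (htrans : ∀ a b : Fin n, n - p ^ r ≤ (a : ℕ) → n - p ^ r ≤ (b : ℕ) →
      ∃ σ ∈ H, σ a = b) :
    -- every `S_n`-orbit on `Tab^λ × Tab^μ` contains an `H`-fixed pair
    (∀ (s : Fin n → Fin ℓ) (t : Fin n → Fin m), TabP lam s → TabP mu t →
      ∃ (s' : Fin n → Fin ℓ) (t' : Fin n → Fin m), TabP lam s' ∧ TabP mu t' ∧
        (∀ σ ∈ H, s' ∘ ⇑σ⁻¹ = s' ∧ t' ∘ ⇑σ⁻¹ = t') ∧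
        ∃ π : Equiv.Perm (Fin n), s ∘ ⇑π⁻¹ = s' ∧ t ∘ ⇑π⁻¹ = t') ∧
    -- two `H`-fixed pairs lie in the same `S_n`-orbit iff in the same `S_{n−p^r}`-orbit
    (∀ (s s' : Fin n → Fin ℓ) (t t' : Fin n → Fin m),
      TabP lam s → TabP mu t → TabP lam s' → TabP mu t' →
      (∀ σ ∈ H, s ∘ ⇑σ⁻¹ = s ∧ t ∘ ⇑σ⁻¹ = t) →
      (∀ σ ∈ H, s' ∘ ⇑σ⁻¹ = s' ∧ t' ∘ ⇑σ⁻¹ = t') →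
      ((∃ π : Equiv.Perm (Fin n), s ∘ ⇑π⁻¹ = s' ∧ t ∘ ⇑π⁻¹ = t') ↔
        ∃ π : Equiv.Perm (Fin n), (∀ a : Fin n, n - p ^ r ≤ (a : ℕ) → π a = a) ∧
          s ∘ ⇑π⁻¹ = s' ∧ t ∘ ⇑π⁻¹ = t')) :=
  stmt9_general p r n ℓ m hn hl hm lam hlstab mu hmstab H hH htrans
end

section
/- Let p be a prime, k a field of characteristic p, and G a finite group. Let M be a finitely generated projective module over the group algebra k[G] (MonoidAlgebra k G), and let g ∈ G be an element of order exactly p. Let x : M → M be the k-linear map m ↦ g·m − m. Then x^p = 0 and ker x = range (x^{p-1}); in particular the dimension of M over k is divisible by p. -/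
/-!
For `a = g - 1 ∈ k[G]` we have `a ^ p = g ^ p - 1 = 0` in characteristic `p`, and
`a ^ (p - 1) = ∑_{i < p} g ^ i` is the norm element of `⟨g⟩`. In `k[G]`, `a * u = 0` means that
`u` is constant on the right cosets `⟨g⟩ h`, so `u` is the norm element times the restriction of
`u` to a set of coset representatives. Exactness of `k[G] → k[G] → k[G]` (multiplication by
`a ^ (p - 1)`, then by `a`) passes to direct summands of free modules, hence to `M`. Finally, once
`ker x = range x^(p-1)`, each step of the chain `range x^i ⊇ range x^(i+1)` (`i < p`) drops the
dimension by exactly `dim ker x`, so `dim M = p * dim ker x`.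
-/
open Module LinearMap Polynomial MonoidAlgebra

theorem sub_one_pow_pred_eq_geom_sum {p : ℕ} [Fact p.Prime] {k A : Type*} [Field k] [CharP k p]
    [Ring A] [Algebra k A] (a : A) : (a - 1) ^ (p - 1) = ∑ i ∈ Finset.range p, a ^ i := by
  have hX : ((X : k[X]) - 1) ^ (p - 1) = ∑ i ∈ Finset.range p, X ^ i := by
    refine mul_right_cancel₀ (X_sub_C_ne_zero (1 : k)) ?_
    rw [C_1, ← pow_succ, Nat.sub_add_cancel (Fact.out : p.Prime).one_le, sub_pow_char, one_pow,
      geom_sum_mul]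
  simpa using congrArg (aeval a) hX

theorem sub_one_pow_char_eq {p : ℕ} [Fact p.Prime] {k A : Type*} [Field k] [CharP k p]
    [Ring A] [Algebra k A] (a : A) : (a - 1) ^ p = a ^ p - 1 := by
  rw [← mul_geom_sum, ← sub_one_pow_pred_eq_geom_sum (k := k), ← pow_succ',
    Nat.sub_add_cancel (Fact.out : p.Prime).one_le]

theorem MonoidAlgebra.exists_sum_of_subgroup_mul_eq {k G : Type*} [Semiring k] [Group G]
    (H : Subgroup G) [Fintype H] {u : MonoidAlgebra k G} (hu : ∀ γ ∈ H, of k G γ * u = u) :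
    ∃ v, (∑ γ : H, of k G γ) * v = u := by
  classical
  let rep : G → G := fun h => (Quotient.mk (QuotientGroup.rightRel H) h).out
  have rep_mem (h : G) : h * (rep h)⁻¹ ∈ H := QuotientGroup.rightRel_apply.mp (Quotient.mk_out h)
  have rep_inv_mul (γ : H) (h : G) : rep ((γ : G)⁻¹ * h) = rep h := by
    refine congrArg Quotient.out (Quotient.sound (QuotientGroup.rightRel_apply.mpr ?_))
    simp [γ.2]
  refine ⟨ofCoeff (u.coeff.filter fun h => rep h = h), ?_⟩
  ext h
  have hcoeff (γ : H) : u.coeff ((γ : G)⁻¹ * h) = u.coeff h := by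
    simpa [of_apply, coeff_single_mul_apply] using congrArg (coeff · h) (hu γ γ.2)
  have hrep (γ : H) : rep h = (γ : G)⁻¹ * h ↔ γ = ⟨h * (rep h)⁻¹, rep_mem h⟩ := by
    rw [Subtype.ext_iff, eq_inv_mul_iff_mul_eq, eq_mul_inv_iff_mul_eq]
  simp [Finset.sum_mul, coeff_sum, of_apply, coeff_single_mul_apply, Finsupp.filter_apply,
    rep_inv_mul, hcoeff, hrep]

theorem MonoidAlgebra.sum_zpowers_of {k G : Type*} [Semiring k] [Group G] {g : G}
    (hg : IsOfFinOrder g) [Fintype (Subgroup.zpowers g)] :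
    ∑ γ : Subgroup.zpowers g, of k G γ = ∑ i ∈ Finset.range (orderOf g), of k G g ^ i := by
  rw [← Fin.sum_univ_eq_sum_range, ← (finEquivZPowers hg).sum_comp]
  simp [finEquivZPowers_apply]

theorem MonoidAlgebra.exists_of_sub_one_pow_pred_mul_eq {p : ℕ} [Fact p.Prime] {k G : Type*}
    [Field k] [CharP k p] [Group G] {g : G} (hg : orderOf g = p) {u : MonoidAlgebra k G}
    (hu : (of k G g - 1) * u = 0) : ∃ v, (of k G g - 1) ^ (p - 1) * v = u := by
  have hfin : IsOfFinOrder g := orderOf_pos_iff.mp (hg ▸ (Fact.out : p.Prime).pos)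
  have : Fintype (Subgroup.zpowers g) := Fintype.ofEquiv _ (finEquivZPowers hfin)
  have hgu : of k G g ∈ MulAction.stabilizerSubmonoid _ u := by
    simpa [sub_mul, sub_eq_zero] using hu
  have hfix (γ : G) (hγ : γ ∈ Subgroup.zpowers g) : of k G γ * u = u := by
    obtain ⟨n, rfl⟩ := hfin.mem_powers_iff_mem_zpowers.mpr hγ
    simpa using (MulAction.stabilizerSubmonoid _ u).pow_mem hgu n
  rw [sub_one_pow_pred_eq_geom_sum (k := k), ← hg, ← sum_zpowers_of hfin]
  exact exists_sum_of_subgroup_mul_eq _ hfix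

theorem Module.Projective.exists_smul_eq_of_smul_eq_zero {A P : Type*} [Semiring A]
    [AddCommMonoid P] [Module A P] [Projective A P] {a b : A}
    (h : ∀ c : A, a * c = 0 → ∃ d, b * d = c) {m : P} (hm : a • m = 0) : ∃ m', b • m' = m := by
  obtain ⟨s, hs⟩ := projective_def'.mp ‹Projective A P›
  have hsm (i : P) : a * s m i = 0 := by
    simpa [hm] using congr($(map_smul s a m) i).symm
  choose d hd using fun i => h _ (hsm i)
  refine ⟨∑ i ∈ (s m).support, d i • i, ?_⟩
  calc b • ∑ i ∈ (s m).support, d i • i = ∑ i ∈ (s m).support, s m i • i := by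
        simp only [Finset.smul_sum, smul_smul, hd]
    _ = m := by simpa [Finsupp.linearCombination_apply, Finsupp.sum] using congr($hs m)

theorem Module.Projective.ker_toModuleEnd_eq_range {R A P : Type*} [CommSemiring R] [Semiring A]
    [AddCommMonoid P] [Module R P] [Module A P] [SMulCommClass A R P] [Projective A P] {a b : A}
    (hab : a * b = 0) (h : ∀ c : A, a * c = 0 → ∃ d, b * d = c) :
    ker (toModuleEnd R P a) = range (toModuleEnd R P b) := by
  refine le_antisymm (fun m hm => exists_smul_eq_of_smul_eq_zero h hm) ?_
  rintro _ ⟨m, rfl⟩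
  simp [mem_ker, smul_smul, hab]

theorem LinearMap.finrank_range_pow_eq_add_of_ker_le {K V : Type*} [DivisionRing K]
    [AddCommGroup V] [Module K V] [FiniteDimensional K V] {x : V →ₗ[K] V} {i : ℕ}
    (h : ker x ≤ range (x ^ i)) :
    finrank K (range (x ^ i)) = finrank K (range (x ^ (i + 1))) + finrank K (ker x) := by
  have hrange : range (x.domRestrict (range (x ^ i))) = range (x ^ (i + 1)) := by
    rw [range_domRestrict, pow_succ', Module.End.mul_eq_comp, range_comp]
  have hker : ker (x.domRestrict (range (x ^ i))) ≃ₗ[K] ker x := by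
    rw [ker_domRestrict]; exact Submodule.comapSubtypeEquivOfLe h
  rw [← hrange, ← hker.finrank_eq, finrank_range_add_finrank_ker]

theorem LinearMap.dvd_finrank_of_ker_eq_range_pow {K V : Type*} [DivisionRing K]
    [AddCommGroup V] [Module K V] [FiniteDimensional K V] {x : V →ₗ[K] V} {p : ℕ}
    (hxp : x ^ p = 0) (hker : ker x = range (x ^ (p - 1))) : p ∣ finrank K V := by
  have hfinrank (i : ℕ) (hi : i ≤ p) :
      finrank K V = i * finrank K (ker x) + finrank K (range (x ^ i)) := by
    induction i with
    | zero => rw [pow_zero, Module.End.one_eq_id, range_id, finrank_top, zero_mul, zero_add]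
    | succ i ih =>
      have hle : ker x ≤ range (x ^ i) := by
        rw [hker, ← pow_mul_pow_sub x (by omega : i ≤ p - 1), Module.End.mul_eq_comp]
        exact range_comp_le_range _ _
      rw [ih (by omega), finrank_range_pow_eq_add_of_ker_le hle]
      ring
  have := hfinrank p le_rfl
  rw [hxp, range_zero, finrank_bot, add_zero] at this
  exact ⟨_, this⟩

/-- if `M` is a finitely generated projective module over `k[G]` for a
finite group `G` over a field `k` of characteristic `p`, and `g ∈ G` has order exactly
`p`, then the `k`-linear map `x : m ↦ g·m − m` satisfies `x^p = 0` and
`ker x = range x^(p-1)`; in particular `p` divides `dim_k M`. -/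
theorem stmt12 (p : ℕ) (hp : p.Prime) (k : Type*) [Field k] [CharP k p]
    (G : Type*) [Group G] [Fintype G]
    (M : Type*) [AddCommGroup M] [Module (MonoidAlgebra k G) M]
    [Module k M] [IsScalarTower k (MonoidAlgebra k G) M]
    [Module.Projective (MonoidAlgebra k G) M] [Module.Finite (MonoidAlgebra k G) M]
    (g : G) (hg : orderOf g = p)
    (x : M →ₗ[k] M) (hxdef : ∀ m : M, x m = (MonoidAlgebra.of k G g) • m - m) :
    x ^ p = 0 ∧ LinearMap.ker x = LinearMap.range (x ^ (p - 1)) ∧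
      p ∣ Module.finrank k M := by
  have : Fact p.Prime := ⟨hp⟩
  have : Module.Finite k M := .trans (MonoidAlgebra k G) M
  set a := of k G g - 1
  have hx : x = toModuleEnd k M a := by ext m; simp [hxdef, a, sub_smul]
  have hpow (n : ℕ) : x ^ n = toModuleEnd k M (a ^ n) := by rw [hx, map_pow]
  have ha : a ^ p = 0 := by
    rw [sub_one_pow_char_eq (k := k), ← map_pow, ← hg, pow_orderOf_eq_one, map_one, sub_self]
  have hxp : x ^ p = 0 := by rw [hpow, ha, map_zero]
  have hker : ker x = range (x ^ (p - 1)) := by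
    rw [hpow, hx]
    refine Projective.ker_toModuleEnd_eq_range ?_ fun _ => exists_of_sub_one_pow_pred_mul_eq hg
    rw [← pow_succ', Nat.sub_add_cancel hp.one_le, ha]
  exact ⟨hxp, hker, dvd_finrank_of_ker_eq_range_pow hxp hker⟩
end
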